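/- arXiv:1910.07125 — 2 statements merged into one kernel-verified Lean document; each statement's English description precedes it below -/
import Mathlib

section
/- Let T be a tree on n vertices with geodesic distance (Wiener index) S. In the first-order subdivision of T, the sum of graph distances over all pairs consisting of one original vertex (a vertex of T) and one new edge-vertex equals 4S − n(n−1). -/
/-!
Walks of `G` lift to walks of the subdivision of twice the length. Conversely, the potential
`x ↦ 2 d(w, x)`, extended to the edge vertex of `ab` by `d(w, a) + d(w, b)`, changes by at most
one along each edge of the subdivision; hence the edge vertex of `ab` lies at distance
`2 min (d(v, a), d(v, b)) + 1` from `v`. In a tree, sending each vertex `u ≠ v` to the first edge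
of a shortest path from `u` to `v` is injective, hence a bijection onto the `n - 1` edges, and the
edge assigned to `u` lies at distance `2 d(v, u) - 1` from `v`. Summing over `v` gives
`2 ∑ᵤ ∑ᵥ d(u, v) - n (n - 1) = 4 S - n (n - 1)`.
-/

/-- The first-order subdivision of a simple graph `G = (V, E)`: the bipartite graph on
`V ⊕ E` where `v : V` is adjacent to `e : E` iff `v` is an endpoint of `e`. -/
def firstSubdivision {V : Type} (G : SimpleGraph V) : SimpleGraph (V ⊕ G.edgeSet) :=
  SimpleGraph.fromRel fun a b =>
    match a, b with
    | Sum.inl v, Sum.inr e => v ∈ (e : Sym2 V)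
    | _, _ => False

open SimpleGraph

variable {V : Type} {G : SimpleGraph V}

@[simp]
lemma firstSubdivision_adj_inl_inr {v : V} {e : G.edgeSet} :
    (firstSubdivision G).Adj (.inl v) (.inr e) ↔ v ∈ (e : Sym2 V) := by
  simp [firstSubdivision]

@[simp]
lemma firstSubdivision_adj_inr_inl {v : V} {e : G.edgeSet} :
    (firstSubdivision G).Adj (.inr e) (.inl v) ↔ v ∈ (e : Sym2 V) := by
  simp [firstSubdivision]

@[simp]
lemma not_firstSubdivision_adj_inl_inl {u v : V} :
    ¬(firstSubdivision G).Adj (.inl u) (.inl v) := by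
  simp [firstSubdivision]

@[simp]
lemma not_firstSubdivision_adj_inr_inr {e e' : G.edgeSet} :
    ¬(firstSubdivision G).Adj (.inr e) (.inr e') := by
  simp [firstSubdivision]

namespace SimpleGraph.Walk

lemma apply_le_apply_add_length {W : Type*} {H : SimpleGraph W} (f : W → ℕ)
    (hf : ∀ x y, H.Adj x y → f x ≤ f y + 1) {x t : W} (p : H.Walk x t) :
    f x ≤ f t + p.length := by
  induction p with
  | nil => simp
  | cons h _ ih =>
    have := hf _ _ h
    rw [length_cons]
    omega

def toFirstSubdivision : {u w : V} → G.Walk u w →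
    (firstSubdivision G).Walk (.inl u) (.inl w)
  | _, _, nil => nil
  | u, _, cons (v := x) h p =>
      cons (v := .inr ⟨s(u, x), h⟩) (by simp) (cons (by simp) p.toFirstSubdivision)

@[simp]
lemma length_toFirstSubdivision {u w : V} (p : G.Walk u w) :
    p.toFirstSubdivision.length = 2 * p.length := by
  induction p with
  | nil => rfl
  | cons _ _ ih => simp [toFirstSubdivision, ih]; ring

lemma two_mul_dist_le_length_of_firstSubdivision {u w : V}
    (p : (firstSubdivision G).Walk (.inl u) (.inl w)) : 2 * G.dist u w ≤ p.length := by
  let f : V ⊕ G.edgeSet → ℕ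
    | .inl x => 2 * G.dist w x
    | .inr e => Sym2.lift ⟨fun a b => G.dist w a + G.dist w b, fun _ _ => add_comm _ _⟩ e
  have hf_edge : ∀ (a : V) (e : G.edgeSet), a ∈ (e : Sym2 V) →
      2 * G.dist w a ≤ f (.inr e) + 1 ∧ f (.inr e) ≤ 2 * G.dist w a + 1 := by
    rintro a ⟨e, he⟩ ha
    obtain ⟨b, rfl⟩ := Sym2.mem_iff_exists.1 ha
    have := (G.mem_edgeSet.1 he).diff_dist_adj (u := w)
    simp only [f, Sym2.lift_mk]
    omega
  have hf : ∀ x y, (firstSubdivision G).Adj x y → f x ≤ f y + 1 := by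
    rintro (a | e) (b | e') hxy <;> simp only [firstSubdivision_adj_inl_inr,
      firstSubdivision_adj_inr_inl, not_firstSubdivision_adj_inl_inl,
      not_firstSubdivision_adj_inr_inr] at hxy
    · exact (hf_edge a e' hxy).1
    · exact (hf_edge b e hxy).2
  simpa [f, dist_comm] using apply_le_apply_add_length f hf p

lemma two_mul_min_dist_add_one_le_length_of_firstSubdivision {v a b : V} {hab : G.Adj a b}
    (q : (firstSubdivision G).Walk (.inl v) (.inr ⟨s(a, b), hab⟩)) :
    2 * min (G.dist v a) (G.dist v b) + 1 ≤ q.length := by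
  -- read backwards, `q` leaves the edge vertex through one of its endpoints
  rw [← length_reverse]
  generalize q.reverse = r
  cases r with
  | @cons _ x _ h p =>
    rcases x with c | e
    · have hc : c = a ∨ c = b := by simpa using h
      have := p.two_mul_dist_le_length_of_firstSubdivision
      rw [dist_comm] at this
      rw [length_cons]
      rcases hc with rfl | rfl <;> omega
    · simp at h

end SimpleGraph.Walk

namespace SimpleGraph

lemma Reachable.dist_firstSubdivision_inl_inr_le {v c : V} {e : G.edgeSet}
    (h : G.Reachable v c) (hc : c ∈ (e : Sym2 V)) :
    (firstSubdivision G).dist (.inl v) (.inr e) ≤ 2 * G.dist v c + 1 := by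
  obtain ⟨p, hp⟩ := h.exists_walk_length_eq_dist
  simpa [hp] using dist_le (p.toFirstSubdivision.concat (firstSubdivision_adj_inl_inr.2 hc))

lemma Reachable.dist_firstSubdivision_inl_inr {v a b : V} (h : G.Reachable v a)
    (hab : G.Adj a b) :
    (firstSubdivision G).dist (.inl v) (.inr ⟨s(a, b), hab⟩) =
      2 * min (G.dist v a) (G.dist v b) + 1 := by
  refine le_antisymm ?_ ?_
  · rcases min_choice (G.dist v a) (G.dist v b) with hmin | hmin <;> rw [hmin]
    · exact h.dist_firstSubdivision_inl_inr_le (Sym2.mem_mk_left a b)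
    · exact (h.trans hab.reachable).dist_firstSubdivision_inl_inr_le (Sym2.mem_mk_right a b)
  · have hr : (firstSubdivision G).Reachable (.inl v) (.inr ⟨s(a, b), hab⟩) :=
      ⟨h.some.toFirstSubdivision.concat (by simp)⟩
    obtain ⟨q, hq⟩ := hr.exists_walk_length_eq_dist
    exact hq ▸ q.two_mul_min_dist_add_one_le_length_of_firstSubdivision

lemma Reachable.exists_adj_dist_add_one_eq {u v : V} (h : G.Reachable u v) (hne : u ≠ v) :
    ∃ w, G.Adj u w ∧ G.dist w v + 1 = G.dist u v := by
  obtain ⟨p, hp⟩ := h.exists_walk_length_eq_dist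
  have hnil : ¬p.Nil := Walk.not_nil_of_ne hne
  have hadj := p.adj_snd hnil
  refine ⟨p.snd, hadj, le_antisymm ?_ ?_⟩
  · rw [← hp, ← p.length_tail_add_one hnil]
    exact Nat.add_le_add_right (dist_le _) 1
  · have := hadj.reachable.dist_triangle_left v
    rwa [dist_eq_one_iff_adj.2 hadj, add_comm] at this

lemma IsTree.sum_dist_firstSubdivision_inl_inr [Fintype V] [Fintype G.edgeSet] (hG : G.IsTree)
    (v : V) :
    ∑ e : G.edgeSet, ((firstSubdivision G).dist (.inl v) (.inr e) : ℤ) =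
      2 * ∑ u, (G.dist v u : ℤ) - (Fintype.card V - 1) := by
  classical
  choose parent hadj hdist using fun u : {u // u ≠ v} ↦
    (hG.connected u v).exists_adj_dist_add_one_eq u.2
  let parentEdge (u : {u // u ≠ v}) : G.edgeSet := ⟨s(u, parent u), hadj u⟩
  have hinj : parentEdge.Injective := by
    intro u u' huu'
    have := congrArg Subtype.val huu'
    simp only [parentEdge, Sym2.eq_iff] at this
    rcases this with ⟨h, -⟩ | ⟨h, h'⟩
    · exact Subtype.ext h
    · have h₁ := hdist u
      have h₂ := hdist u'
      rw [h'] at h₁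
      rw [← h] at h₂
      omega
  have hcard : Fintype.card {u // u ≠ v} = Fintype.card G.edgeSet := by
    have := hG.card_edgeFinset
    rw [edgeFinset_card] at this
    rw [Fintype.card_subtype_compl, Fintype.card_subtype_eq]
    omega
  have hterm (u : {u // u ≠ v}) :
      (2 * G.dist v u - 1 : ℤ) = (firstSubdivision G).dist (.inl v) (.inr (parentEdge u)) := by
    rw [(hG.connected v u).dist_firstSubdivision_inl_inr (hadj u)]
    have := hdist u
    rw [dist_comm, dist_comm (u := u.1)] at this
    omega
  rw [← Fintype.sum_bijective parentEdge
    ((Fintype.bijective_iff_injective_and_card _).2 ⟨hinj, hcard⟩) _ _ hterm]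
  have hsplit := Fintype.sum_eq_add_sum_subtype_ne (fun u ↦ (2 * G.dist v u - 1 : ℤ)) v
  rw [Finset.sum_sub_distrib, ← Finset.mul_sum] at hsplit
  simp only [dist_self, Finset.sum_const, Finset.card_univ, nsmul_one, Nat.cast_zero] at hsplit
  linarith

end SimpleGraph

lemma even_sum_sum_of_symm {α : Type*} [Fintype α] (f : α → α → ℕ)
    (hsymm : ∀ a b, f a b = f b a) (hdiag : ∀ a, f a a = 0) : Even (∑ a, ∑ b, f a b) := by
  rw [← ZMod.natCast_eq_zero_iff_even]
  push_cast
  rw [← Fintype.sum_prod_type']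
  refine Finset.sum_ninvolution Prod.swap (fun p ↦ ?_) (fun p hp hswap ↦ hp ?_)
    (fun _ ↦ Finset.mem_univ _) Prod.swap_swap
  · rw [Prod.fst_swap, Prod.snd_swap, hsymm p.2, CharTwo.add_self_eq_zero]
  · rw [← congrArg Prod.fst hswap, Prod.fst_swap, hdiag, Nat.cast_zero]

/-- For a tree `T` on `n` vertices with Wiener index `S`, in the first-order subdivision
of `T` the sum of graph distances over all pairs consisting of one original vertex and
one new edge-vertex equals `4S - n(n-1)`.  Here `S` is the Wiener index of `T`, i.e. the
sum of distances over all unordered pairs of distinct vertices of `T`. -/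
theorem crossSum_firstSubdivision {V : Type} [Fintype V] (G : SimpleGraph V)
    [Fintype G.edgeSet] (hG : G.IsTree) :
    (∑ v : V, ∑ e : G.edgeSet,
        ((firstSubdivision G).dist (Sum.inl v) (Sum.inr e) : ℤ)) =
      4 * (((∑ u : V, ∑ v : V, G.dist u v) / 2 : ℕ) : ℤ) -
        (Fintype.card V : ℤ) * ((Fintype.card V : ℤ) - 1) := by
  obtain ⟨S, hS⟩ := even_sum_sum_of_symm G.dist (fun _ _ ↦ G.dist_comm) fun _ ↦ G.dist_self
  have hS' : ∑ u, ∑ v, (G.dist u v : ℤ) = S + S := mod_cast hS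
  rw [hS, ← two_mul, Nat.mul_div_cancel_left _ two_pos]
  simp only [hG.sum_dist_firstSubdivision_inl_inr, Finset.sum_sub_distrib, ← Finset.mul_sum, hS',
    Finset.sum_const, Finset.card_univ, nsmul_eq_mul]
  ring
end

section
/- Let T be a tree on n vertices with geodesic distance (Wiener index) S, and for t ≥ 1 let T'(t) be the result of applying the first-order subdivision operation t times, starting from T. Then the geodesic distance of T'(t) equals 8^t·S − (1/3)(2^{3t} − 2^t)(n−1) + (2^{2t−1} − 2^{3t−1})(n−1)². -/
/-- A finite simple graph, bundled with its (finite) vertex type. -/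
structure FinSimpleGraph where
  V : Type
  fV : Fintype V
  G : SimpleGraph V

attribute [instance] FinSimpleGraph.fV

/-- The geodesic distance (Wiener index) of a finite simple graph: the sum of the graph
distances over all unordered pairs of distinct vertices. -/
noncomputable def wienerIndex {V : Type} [Fintype V] (G : SimpleGraph V) : ℕ :=
  (∑ u : V, ∑ v : V, G.dist u v) / 2

/-- One application of the first-order subdivision operation to a bundled finite graph. -/
noncomputable def firstSubdivisionStep (X : FinSimpleGraph) : FinSimpleGraph :=
  letI : Fintype X.G.edgeSet := Fintype.ofFinite _
  { V := X.V ⊕ X.G.edgeSet, fV := inferInstance, G := firstSubdivision X.G }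

/-- `t`-fold application of the first-order subdivision operation. -/
noncomputable def firstSubdivisionIter (X : FinSimpleGraph) : ℕ → FinSimpleGraph
  | 0 => X
  | t + 1 => firstSubdivisionStep (firstSubdivisionIter X t)

/-!
Subdividing every edge of a tree `G` with `n` vertices and `m = n - 1` edges gives again a tree
`S(G)`: it is connected and has `2m` edges on `n + m` vertices. Distances between old vertices
double. A subdivision vertex `e = ab` of the tree `S(G)` has exactly the two neighbours `a`, `b`,
and exactly one of them lies on the path from `e` to any other vertex `y`, so
`2 d(e, y) = d(a, y) + d(b, y)`. Summing these identities, and matching each edge of `G` with its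
endpoint farther from a fixed vertex `u` (a bijection onto the vertices other than `u`), gives
`W(S(G)) + 2nm = 8 W(G)`; this recursion solves to the closed form.
-/

open Finset Sum

def Sym2.sumMap {α M : Type*} [AddCommMagma M] (f : α → M) : Sym2 α → M :=
  Sym2.lift ⟨fun a b => f a + f b, fun _ _ => add_comm _ _⟩

@[simp]
lemma Sym2.sumMap_mk {α M : Type*} [AddCommMagma M] (f : α → M) (a b : α) :
    Sym2.sumMap f s(a, b) = f a + f b := rfl

namespace SimpleGraph

section Tree

variable {V : Type*} {G : SimpleGraph V} {u v w w' : V}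

lemma Reachable.exists_adj_dist_add_one (h : G.Reachable u v) (huv : u ≠ v) :
    ∃ w, G.Adj w v ∧ G.dist u w + 1 = G.dist u v := by
  obtain ⟨p, hp⟩ := h.exists_walk_length_eq_dist
  have hnil : ¬p.Nil := Walk.not_nil_of_ne huv
  refine ⟨p.penultimate, p.adj_penultimate hnil, ?_⟩
  have hle := G.dist_le p.dropLast
  have htri := (p.adj_penultimate hnil).reachable.dist_triangle_right u
  rw [Walk.length_dropLast, hp] at hle
  rw [dist_eq_one_iff_adj.2 (p.adj_penultimate hnil)] at htri
  have := h.pos_dist_of_ne huv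
  omega

lemma Walk.apply_le_apply_add_length_s4 {φ : V → ℕ} (hφ : ∀ ⦃x y⦄, G.Adj x y → φ y ≤ φ x + 1)
    (p : G.Walk u v) : φ v ≤ φ u + p.length := by
  induction p with
  | nil => simp
  | cons h _ ih => have := hφ h; rw [length_cons]; omega

lemma Reachable.apply_le_apply_add_dist {φ : V → ℕ} (hφ : ∀ ⦃x y⦄, G.Adj x y → φ y ≤ φ x + 1)
    (h : G.Reachable u v) : φ v ≤ φ u + G.dist u v := by
  obtain ⟨p, hp⟩ := h.exists_walk_length_eq_dist
  exact hp ▸ p.apply_le_apply_add_length_s4 hφ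

lemma IsAcyclic.eq_penultimate_of_dist_add_one (hG : G.IsAcyclic) {p : G.Walk u v}
    (hp : p.IsPath) (hadj : G.Adj v w) (h : G.dist u w + 1 = G.dist u v) :
    w = p.penultimate := by
  obtain ⟨q, hq, hql⟩ := (p.reachable.trans hadj.reachable).exists_path_of_dist
  by_cases hv : v ∈ q.support
  · have hlen := congrArg Walk.length (hG.path_concat hp hq hadj hv)
    rw [Walk.length_concat] at hlen
    have := G.dist_le p
    omega
  · exact hG.eq_penultimate_of_adj_end hp hadj
      (hG.mem_support_of_ne_mem_support_of_adj_of_isPath hp hq hadj hv)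

lemma IsTree.eq_of_adj_of_dist_add_one (hG : G.IsTree) (hw : G.Adj v w) (hw' : G.Adj v w')
    (h : G.dist u w + 1 = G.dist u v) (h' : G.dist u w' + 1 = G.dist u v) : w = w' := by
  obtain ⟨p, hp, -⟩ := (hG.connected u v).exists_path_of_dist
  rw [hG.isAcyclic.eq_penultimate_of_dist_add_one hp hw h,
    hG.isAcyclic.eq_penultimate_of_dist_add_one hp hw' h']

lemma IsTree.dist_add_dist_eq_two_mul {z p q : V} (hG : G.IsTree)
    (hz : ∀ w, G.Adj z w ↔ w = p ∨ w = q) (hpq : p ≠ q) (hu : u ≠ z) :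
    G.dist u p + G.dist u q = 2 * G.dist u z := by
  obtain ⟨w, hwz, hw⟩ := (hG.connected u z).exists_adj_dist_add_one hu
  have hp := hG.dist_eq_dist_add_one_of_adj u ((hz p).2 (.inl rfl))
  have hq := hG.dist_eq_dist_add_one_of_adj u ((hz q).2 (.inr rfl))
  have hunique : ¬(G.dist u p + 1 = G.dist u z ∧ G.dist u q + 1 = G.dist u z) :=
    fun ⟨hp', hq'⟩ =>
      hpq (hG.eq_of_adj_of_dist_add_one ((hz p).2 (.inl rfl)) ((hz q).2 (.inr rfl)) hp' hq')
  rcases (hz w).1 hwz.symm with rfl | rfl <;> omega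

lemma IsTree.sum_dist_add_sum_dist [Fintype V] {z p q : V} (hG : G.IsTree)
    (hz : ∀ w, G.Adj z w ↔ w = p ∨ w = q) (hpq : p ≠ q) :
    ∑ y, G.dist p y + ∑ y, G.dist q y = 2 * ∑ y, G.dist z y + 2 := by
  classical
  have key (y : V) : G.dist p y + G.dist q y = 2 * G.dist z y + if y = z then 2 else 0 := by
    split_ifs with hy
    · subst hy
      rw [dist_comm, dist_eq_one_iff_adj.2 ((hz p).2 (.inl rfl)), dist_comm,
        dist_eq_one_iff_adj.2 ((hz q).2 (.inr rfl)), dist_self]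
    · simpa only [dist_comm (u := y), add_zero] using hG.dist_add_dist_eq_two_mul hz hpq hy
  rw [← sum_add_distrib, sum_congr rfl fun y _ => key y, sum_add_distrib, ← mul_sum,
    sum_ite_eq' univ z, if_pos (mem_univ z)]

lemma IsTree.sum_sumMap_dist_add_card [Fintype V] [Fintype G.edgeSet] (hG : G.IsTree) (u : V) :
    ∑ e : G.edgeSet, Sym2.sumMap (G.dist u) e + Fintype.card G.edgeSet =
      2 * ∑ v, G.dist u v := by
  classical
  choose parent hadj hdist using fun v (hv : v ∈ univ.erase u) =>
    (hG.connected u v).exists_adj_dist_add_one (ne_of_mem_erase hv).symm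
  have hbij : ∑ v ∈ univ.erase u, 2 * G.dist u v =
      ∑ e : G.edgeSet, (Sym2.sumMap (G.dist u) e + 1) := by
    refine sum_bij (fun v hv => ⟨s(parent v hv, v), hadj v hv⟩) (fun _ _ => mem_univ _) ?_ ?_ ?_
    · intro v hv w hw h
      rcases Sym2.eq_iff.1 (Subtype.mk.inj h) with ⟨-, h⟩ | ⟨h₁, h₂⟩
      · exact h
      · have hv' := hdist v hv
        have hw' := hdist w hw
        rw [h₁] at hv'
        rw [← h₂] at hw'
        omega
    · rintro ⟨e, he⟩ -
      induction e using Sym2.ind with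
      | _ a b =>
        have hab := G.mem_edgeSet.1 he
        wlog h : G.dist u a = G.dist u b + 1 generalizing a b
        · obtain ⟨v, hv, hve⟩ := this b a (by rwa [Sym2.eq_swap]) hab.symm
            ((hG.dist_eq_dist_add_one_of_adj u hab).resolve_left h)
          exact ⟨v, hv, by rw [hve]; exact Subtype.ext Sym2.eq_swap⟩
        have ha : a ∈ univ.erase u := mem_erase.2 ⟨by rintro rfl; simp at h, mem_univ a⟩
        refine ⟨a, ha, Subtype.ext ?_⟩
        change s(parent a ha, a) = s(a, b)
        rw [hG.eq_of_adj_of_dist_add_one (hadj a ha).symm hab (hdist a ha) h.symm, Sym2.eq_swap]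
    · intro v hv
      have := hdist v hv
      rw [Sym2.sumMap_mk]
      omega
  rw [sum_add_distrib, sum_const, card_univ, smul_eq_mul, mul_one, ← mul_sum,
    sum_erase _ dist_self] at hbij
  exact hbij.symm

end Tree

section FirstSubdivision

variable {V : Type} {G : SimpleGraph V} {u v : V}

@[simp]
lemma firstSubdivision_adj_inl_inr {e : G.edgeSet} :
    (firstSubdivision G).Adj (inl v) (inr e) ↔ v ∈ (e : Sym2 V) := by
  simp [firstSubdivision]

@[simp]
lemma firstSubdivision_adj_inr_inl {e : G.edgeSet} :
    (firstSubdivision G).Adj (inr e) (inl v) ↔ v ∈ (e : Sym2 V) := by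
  simp [firstSubdivision]

@[simp]
lemma not_firstSubdivision_adj_inl_inl : ¬(firstSubdivision G).Adj (inl u) (inl v) := by
  simp [firstSubdivision]

@[simp]
lemma not_firstSubdivision_adj_inr_inr {e f : G.edgeSet} :
    ¬(firstSubdivision G).Adj (inr e) (inr f) := by
  simp [firstSubdivision]

lemma firstSubdivision_adj_inr_mk_iff {a b : V} (h : s(a, b) ∈ G.edgeSet) (x : V ⊕ G.edgeSet) :
    (firstSubdivision G).Adj (inr ⟨s(a, b), h⟩) x ↔ x = inl a ∨ x = inl b := by
  rcases x with v | f <;> simp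

def Walk.toFirstSubdivision_s4 : {u v : V} → G.Walk u v → (firstSubdivision G).Walk (inl u) (inl v)
  | _, _, .nil => .nil
  | _, _, .cons h p =>
    .cons (v := inr ⟨_, G.mem_edgeSet.2 h⟩) (by simp) (.cons (by simp) p.toFirstSubdivision_s4)

@[simp]
lemma Walk.length_toFirstSubdivision_s4 (p : G.Walk u v) :
    p.toFirstSubdivision_s4.length = 2 * p.length := by
  induction p with
  | nil => rfl
  | cons _ _ ih => simp only [toFirstSubdivision_s4, length_cons, ih]; ring

lemma connected_firstSubdivision (hG : G.Connected) : (firstSubdivision G).Connected := by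
  have hinl (x : V ⊕ G.edgeSet) : ∃ v, (firstSubdivision G).Reachable x (inl v) := by
    rcases x with v | ⟨e, he⟩
    · exact ⟨v, .rfl⟩
    · induction e using Sym2.ind with
      | _ a b => exact ⟨a, Adj.reachable (by simp)⟩
  have := hG.nonempty
  refine ⟨fun x y => ?_⟩
  obtain ⟨u, hu⟩ := hinl x
  obtain ⟨v, hv⟩ := hinl y
  exact hu.trans <| ((hG u v).elim fun p => p.toFirstSubdivision_s4.reachable).trans hv.symm

lemma card_edgeSet_firstSubdivision :
    Nat.card (firstSubdivision G).edgeSet = Nat.card G.Dart := by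
  refine (Nat.card_eq_of_bijective
    (fun d => ⟨s(inl d.fst, inr ⟨d.edge, d.edge_mem⟩), by simp [Dart.edge]⟩) ⟨?_, ?_⟩).symm
  · intro d d' h
    obtain ⟨h₁, h₂⟩ : d.fst = d'.fst ∧ d.edge = d'.edge := by
      simpa [Sym2.eq_iff] using congrArg Subtype.val h
    rw [Dart.edge, Dart.edge, h₁, Sym2.congr_right] at h₂
    exact (Dart.ext_iff d d').2 (Prod.ext h₁ h₂)
  · rintro ⟨x, hx⟩
    induction x using Sym2.ind with
    | _ x y =>
      rw [mem_edgeSet] at hx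
      rcases x with v | ⟨e, he⟩ <;> rcases y with w | ⟨f, hf⟩ <;> simp only [
        not_firstSubdivision_adj_inl_inl, not_firstSubdivision_adj_inr_inr,
        firstSubdivision_adj_inl_inr, firstSubdivision_adj_inr_inl] at hx
      · obtain ⟨w, rfl⟩ := Sym2.mem_iff_exists.1 hx
        exact ⟨⟨(v, w), G.mem_edgeSet.1 hf⟩, rfl⟩
      · obtain ⟨v, rfl⟩ := Sym2.mem_iff_exists.1 hx
        exact ⟨⟨(w, v), G.mem_edgeSet.1 he⟩, Subtype.ext Sym2.eq_swap⟩

lemma card_dart_eq_two_mul_card_edgeSet [Finite V] :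
    Nat.card G.Dart = 2 * Nat.card G.edgeSet := by
  classical
  have := Fintype.ofFinite V
  rw [Nat.card_eq_fintype_card, dart_card_eq_twice_card_edges, edgeFinset_card,
    Nat.card_eq_fintype_card]

lemma isTree_firstSubdivision [Finite V] (hG : G.IsTree) : (firstSubdivision G).IsTree := by
  rw [isTree_iff_connected_and_card] at hG ⊢
  refine ⟨connected_firstSubdivision hG.1, ?_⟩
  rw [card_edgeSet_firstSubdivision, card_dart_eq_two_mul_card_edgeSet, Nat.card_sum, ← hG.2]
  ring

lemma dist_firstSubdivision_inl_inl (hG : G.Connected) (u v : V) :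
    (firstSubdivision G).dist (inl u) (inl v) = 2 * G.dist u v := by
  apply le_antisymm
  · obtain ⟨p, hp⟩ := hG.exists_walk_length_eq_dist u v
    simpa [hp] using dist_le p.toFirstSubdivision_s4
  · let φ : V ⊕ G.edgeSet → ℕ := Sum.elim (2 * G.dist u ·) (Sym2.sumMap (G.dist u) ·)
    have hφ : ∀ ⦃x y⦄, (firstSubdivision G).Adj x y → φ y ≤ φ x + 1 := by
      rintro (a | ⟨e, he⟩) (b | ⟨f, hf⟩) hab <;> simp only [
        not_firstSubdivision_adj_inl_inl, not_firstSubdivision_adj_inr_inr,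
        firstSubdivision_adj_inl_inr, firstSubdivision_adj_inr_inl] at hab
      · obtain ⟨w, rfl⟩ := Sym2.mem_iff_exists.1 hab
        have := (G.mem_edgeSet.1 hf).diff_dist_adj (u := u)
        simp only [φ, Sum.elim_inl, Sum.elim_inr, Sym2.sumMap_mk]
        omega
      · obtain ⟨w, rfl⟩ := Sym2.mem_iff_exists.1 hab
        have := (G.mem_edgeSet.1 he).diff_dist_adj (u := u)
        simp only [φ, Sum.elim_inl, Sum.elim_inr, Sym2.sumMap_mk]
        omega
    simpa [φ] using (connected_firstSubdivision hG (inl u) (inl v)).apply_le_apply_add_dist hφ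

lemma IsTree.dist_firstSubdivision_inl_inr [Finite V] (hG : G.IsTree) (u : V) (e : G.edgeSet) :
    (firstSubdivision G).dist (inl u) (inr e) = Sym2.sumMap (G.dist u) e := by
  obtain ⟨e, he⟩ := e
  induction e using Sym2.ind with
  | _ a b =>
    have := (isTree_firstSubdivision hG).dist_add_dist_eq_two_mul
      (firstSubdivision_adj_inr_mk_iff he) (by simpa using (G.mem_edgeSet.1 he).ne)
      (u := inl u) inl_ne_inr
    rw [dist_firstSubdivision_inl_inl hG.connected, dist_firstSubdivision_inl_inl hG.connected]
      at this
    rw [Sym2.sumMap_mk]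
    omega

variable [Fintype V] [Fintype G.edgeSet]

lemma IsTree.sum_dist_firstSubdivision_inl (hG : G.IsTree) (u : V) :
    ∑ y, (firstSubdivision G).dist (inl u) y + Fintype.card G.edgeSet =
      4 * ∑ v, G.dist u v := by
  rw [Fintype.sum_sum_type]
  simp only [dist_firstSubdivision_inl_inl hG.connected, hG.dist_firstSubdivision_inl_inr]
  rw [← mul_sum, add_assoc, hG.sum_sumMap_dist_add_card]
  ring

lemma IsTree.sum_dist_firstSubdivision_inr (hG : G.IsTree) (e : G.edgeSet) :
    2 * ∑ y, (firstSubdivision G).dist (inr e) y + 2 + 2 * Fintype.card G.edgeSet =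
      4 * ∑ u, Sym2.sumMap (G.dist u) e := by
  obtain ⟨e, he⟩ := e
  induction e using Sym2.ind with
  | _ a b =>
    have := (isTree_firstSubdivision hG).sum_dist_add_sum_dist
      (firstSubdivision_adj_inr_mk_iff he) (by simpa using (G.mem_edgeSet.1 he).ne)
    have ha := hG.sum_dist_firstSubdivision_inl a
    have hb := hG.sum_dist_firstSubdivision_inl b
    simp only [Sym2.sumMap_mk, sum_add_distrib, dist_comm (v := a), dist_comm (v := b)]
    omega

lemma IsTree.sum_sum_dist_firstSubdivision (hG : G.IsTree) :
    ∑ x, ∑ y, (firstSubdivision G).dist x y +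
        (3 * Fintype.card V + Fintype.card G.edgeSet + 1) * Fintype.card G.edgeSet =
      8 * ∑ u, ∑ v, G.dist u v := by
  set n := Fintype.card V
  set m := Fintype.card G.edgeSet
  have hinl : ∑ u, ∑ y, (firstSubdivision G).dist (inl u) y + n * m =
      4 * ∑ u, ∑ v, G.dist u v := by
    rw [mul_sum, ← sum_congr rfl fun u _ => hG.sum_dist_firstSubdivision_inl u,
      sum_add_distrib, sum_const, card_univ, smul_eq_mul]
  have hedges : ∑ u, ∑ e : G.edgeSet, Sym2.sumMap (G.dist u) e + n * m =
      2 * ∑ u, ∑ v, G.dist u v := by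
    rw [mul_sum, ← sum_congr rfl fun u _ => hG.sum_sumMap_dist_add_card u,
      sum_add_distrib, sum_const, card_univ, smul_eq_mul]
  have hinr : 2 * ∑ e : G.edgeSet, ∑ y, (firstSubdivision G).dist (inr e) y + 2 * m + 2 * m * m =
      4 * ∑ u, ∑ e : G.edgeSet, Sym2.sumMap (G.dist u) e := by
    have := sum_congr rfl fun e (_ : e ∈ univ) => hG.sum_dist_firstSubdivision_inr e
    simp only [sum_add_distrib, sum_const, card_univ, smul_eq_mul, ← mul_sum] at this
    rw [sum_comm (γ := V)]
    linarith
  rw [Fintype.sum_sum_type]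
  linarith

end FirstSubdivision

section WienerIndex

variable {V : Type} [Fintype V]

lemma even_sum_sum_dist (G : SimpleGraph V) : Even (∑ u, ∑ v, G.dist u v) := by
  rw [← ZMod.natCast_eq_zero_iff_even, ← Fintype.sum_prod_type']
  push_cast
  refine sum_ninvolution Prod.swap (fun p => ?_) (fun p hp h => hp ?_) (fun _ => mem_univ _)
    Prod.swap_swap
  · rw [Prod.fst_swap, Prod.snd_swap, dist_comm, CharTwo.add_self_eq_zero]
  · rw [show p.1 = p.2 from congrArg Prod.snd h, dist_self, Nat.cast_zero]

lemma two_mul_wienerIndex (G : SimpleGraph V) :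
    2 * wienerIndex G = ∑ u, ∑ v, G.dist u v :=
  Nat.mul_div_cancel' (even_iff_two_dvd.1 (even_sum_sum_dist G))

theorem IsTree.wienerIndex_firstSubdivision {G : SimpleGraph V} [Fintype G.edgeSet]
    (hG : G.IsTree) :
    wienerIndex (firstSubdivision G) + 2 * (Fintype.card V * Fintype.card G.edgeSet) =
      8 * wienerIndex G := by
  have hmn : Fintype.card G.edgeSet + 1 = Fintype.card V := by
    rw [← edgeFinset_card]
    exact hG.card_edgeFinset
  have := hG.sum_sum_dist_firstSubdivision
  rw [← two_mul_wienerIndex, ← two_mul_wienerIndex, ← hmn] at this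
  rw [← hmn]
  linarith

end WienerIndex

end SimpleGraph

open SimpleGraph

variable {X : FinSimpleGraph}

lemma isTree_firstSubdivisionIter (hX : X.G.IsTree) (t : ℕ) :
    (firstSubdivisionIter X t).G.IsTree := by
  induction t with
  | zero => exact hX
  | succ t ih => exact isTree_firstSubdivision ih

lemma card_firstSubdivisionStep (hX : X.G.IsTree) :
    Fintype.card (firstSubdivisionStep X).V + 1 = 2 * Fintype.card X.V := by
  -- the instance chosen inside `firstSubdivisionStep`
  let : Fintype X.G.edgeSet := Fintype.ofFinite _
  have := hX.card_edgeFinset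
  rw [edgeFinset_card] at this
  change Fintype.card (X.V ⊕ X.G.edgeSet) + 1 = _
  rw [Fintype.card_sum]
  omega

lemma wienerIndex_firstSubdivisionStep (hX : X.G.IsTree) :
    (wienerIndex (firstSubdivisionStep X).G : ℚ) =
      8 * wienerIndex X.G - 2 * Fintype.card X.V * (Fintype.card X.V - 1) := by
  let : Fintype X.G.edgeSet := Fintype.ofFinite _
  have hmn := hX.card_edgeFinset
  rw [edgeFinset_card] at hmn
  have h := congrArg (Nat.cast : ℕ → ℚ) hX.wienerIndex_firstSubdivision
  change (wienerIndex (firstSubdivision X.G) : ℚ) = _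
  rw [← hmn] at h ⊢
  push_cast at h ⊢
  linear_combination h

lemma card_firstSubdivisionIter (hX : X.G.IsTree) (t : ℕ) :
    (Fintype.card (firstSubdivisionIter X t).V : ℚ) - 1 = 2 ^ t * (Fintype.card X.V - 1) := by
  induction t with
  | zero => rw [pow_zero, one_mul]; rfl
  | succ t ih =>
    have h : (Fintype.card (firstSubdivisionIter X (t + 1)).V : ℚ) + 1 =
        2 * Fintype.card (firstSubdivisionIter X t).V := by
      exact_mod_cast card_firstSubdivisionStep (isTree_firstSubdivisionIter hX t)
    rw [pow_succ]
    linear_combination h + 2 * ih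

lemma wienerIndex_firstSubdivisionIter (hX : X.G.IsTree) (t : ℕ) :
    (wienerIndex (firstSubdivisionIter X t).G : ℚ) =
      8 ^ t * wienerIndex X.G - (8 ^ t - 2 ^ t) * (Fintype.card X.V - 1) / 3
        - (8 ^ t - 4 ^ t) * (Fintype.card X.V - 1) ^ 2 / 2 := by
  induction t with
  | zero => simp only [pow_zero, sub_self, zero_mul, zero_div, sub_zero, one_mul]; rfl
  | succ t ih =>
    have h4 (n : ℕ) : (4 : ℚ) ^ n = (2 ^ n) ^ 2 := by rw [← pow_mul, mul_comm, pow_mul]; norm_num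
    have hstep := wienerIndex_firstSubdivisionStep (isTree_firstSubdivisionIter hX t)
    change (wienerIndex (firstSubdivisionStep (firstSubdivisionIter X t)).G : ℚ) = _
    rw [hstep, ih, eq_add_of_sub_eq (card_firstSubdivisionIter hX t), h4, h4]
    ring

theorem wiener_firstSubdivisionIter_general {V : Type} [Fintype V] (G : SimpleGraph V)
    (hG : G.IsTree) (t : ℕ) :
    (wienerIndex (firstSubdivisionIter ⟨V, inferInstance, G⟩ t).G : ℚ) =
      8 ^ t * (wienerIndex G : ℚ)
        - (1 / 3) * ((2 : ℚ) ^ (3 * t) - 2 ^ t) * ((Fintype.card V : ℚ) - 1)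
        + ((2 : ℚ) ^ (2 * t - 1) - 2 ^ (3 * t - 1)) * ((Fintype.card V : ℚ) - 1) ^ 2 := by
  -- At `t = 0` both exponents truncate to `0`, so this holds for every `t`.
  have hexp : (2 : ℚ) ^ (2 * t - 1) - 2 ^ (3 * t - 1) = -((8 ^ t - 4 ^ t) / 2) := by
    rcases t with _ | t
    · norm_num
    · rw [show 2 * (t + 1) - 1 = 2 * t + 1 by omega, show 3 * (t + 1) - 1 = 3 * t + 2 by omega,
        pow_succ, pow_add, pow_mul, pow_mul]
      norm_num
      ring
  rw [wienerIndex_firstSubdivisionIter (X := ⟨V, inferInstance, G⟩) hG t, hexp, pow_mul]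
  norm_num
  ring

/-- For a tree `T` on `n` vertices with Wiener index `S`, the Wiener index of its `t`-fold
first-order subdivision `T'(t)` (with `t ≥ 1`) equals
`8^t·S − (1/3)(2^{3t} − 2^t)(n−1) + (2^{2t−1} − 2^{3t−1})(n−1)²`. -/
theorem wiener_firstSubdivisionIter {V : Type} [Fintype V] (G : SimpleGraph V)
    (hG : G.IsTree) (t : ℕ) (ht : 1 ≤ t) :
    (wienerIndex (firstSubdivisionIter ⟨V, inferInstance, G⟩ t).G : ℚ) =
      8 ^ t * (wienerIndex G : ℚ)
        - (1 / 3) * ((2 : ℚ) ^ (3 * t) - 2 ^ t) * ((Fintype.card V : ℚ) - 1)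
        + ((2 : ℚ) ^ (2 * t - 1) - 2 ^ (3 * t - 1)) * ((Fintype.card V : ℚ) - 1) ^ 2 :=
  wiener_firstSubdivisionIter_general G hG t
end
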